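/- arXiv:1410.3451 — 2 statements merged into one kernel-verified Lean document; each statement's English description precedes it below -/
import Mathlib

section
/- Let R be a Noetherian ring. Then every ideal I ⊆ R is weakly proregular: for any finite generating set (f₀,…,f_n) of I and every integer k < 0, the inverse system of Koszul cohomology groups (H^k(K(R,(f₀^i,…,f_n^i))))_{i≥1}, with transition maps induced by multiplication, is pro-zero. -/
open Classical

section Koszul

variable {R : Type*} [CommRing R] {m : ℕ}

/-- The degree `−p` term of the Koszul complex `K(R, f)` of an `m`-tuple `f`:
the free module on `p`-element subsets of `{0,…,m−1}` (i.e. `Λ^p R^m`). -/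
def KoszulTerm (R : Type*) [CommRing R] (m p : ℕ) : Type _ :=
  {S : Finset (Fin m) // S.card = p} → R

instance (R : Type*) [CommRing R] (m p : ℕ) : AddCommGroup (KoszulTerm R m p) := by
  unfold KoszulTerm; infer_instance

/-- The sign `(−1)^{#{j ∈ S | j < i}}` appearing in the Koszul differential. -/
def koszulSign (i : Fin m) (S : Finset (Fin m)) : ℤ :=
  (-1) ^ (S.filter (fun j => j < i)).card

/-- The Koszul differential `K(R,f)^{−(p+1)} → K(R,f)^{−p}`,
`e_{i₀…i_p} ↦ Σ_j (−1)^j f_{i_j} e_{i₀…î_j…i_p}`. -/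
def koszulDiff (f : Fin m → R) (p : ℕ) (x : KoszulTerm R m (p + 1)) :
    KoszulTerm R m p :=
  fun S => ∑ i ∈ (S.1ᶜ).attach,
    (koszulSign i.1 S.1 : R) * f i.1 *
      x ⟨insert i.1 S.1, by
        rw [Finset.card_insert_of_notMem (Finset.mem_compl.mp i.2), S.2]⟩

/-- The transition map of Koszul complexes `K(R, f^j) → K(R, f^i)` for `i ≤ j`:
multiplication by `∏_{s ∈ S} f_s^{j−i}` on the basis vector `e_S`. -/
def koszulTransition (f : Fin m → R) (i j : ℕ) (p : ℕ)
    (x : KoszulTerm R m p) : KoszulTerm R m p :=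
  fun S => (∏ s ∈ S.1, f s ^ (j - i)) * x S

end Koszul

/-!
Induct on the length of the sequence. Write `f = (f', g)` with `g` the last element; then
`K(f)` is the mapping cone of multiplication by `g` on `K(f')`, so a cocycle `x` of `K(f^j)`
splits into a part `a` avoiding the last index and a part `b` containing it, with `b` a cocycle
of `K(f'^j)` and `d a = ± g^j b`. In positive degree, the induction hypothesis (one degree lower)
makes the transported `b` a boundary `d W`; in degree zero this is the Noetherian input:
`g^e z ∈ (f'^e)` forces `g^(e-c) z ∈ (f'^c)` for `e ≫ c`, by stabilisation of the annihilators
of the powers of `g` together with Artin–Rees. Then `a ± g W` is a cocycle of `K(f')`, hence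
eventually a boundary, and the two primitives glue to a primitive of the transported `x`.
-/

section Noetherian

variable {R : Type*} [CommRing R] [IsNoetherianRing R]

theorem IsNoetherianRing.exists_pow_mul_eq_zero_of_pow_mul_eq_zero (g : R) :
    ∃ k₀, ∀ k (w : R), g ^ k * w = 0 → g ^ k₀ * w = 0 := by
  obtain ⟨k₀, hk₀⟩ := (LinearMap.mulLeft R g).eventually_iSup_ker_pow_eq.exists
  refine ⟨k₀, fun k w hw => ?_⟩
  have hk : w ∈ LinearMap.ker (LinearMap.mulLeft R g ^ k) := by
    simpa [LinearMap.pow_mulLeft] using hw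
  have h := le_iSup (fun n => LinearMap.ker (LinearMap.mulLeft R g ^ n)) k hk
  rw [hk₀] at h
  simpa [LinearMap.pow_mulLeft] using h

theorem Ideal.exists_pow_add_inf_span_singleton_le (J : Ideal R) (a : R) :
    ∃ c, ∀ n, J ^ (n + c) ⊓ Ideal.span {a} ≤ J ^ n * Ideal.span {a} := by
  obtain ⟨c, hc⟩ := J.exists_pow_inf_eq_pow_smul (Ideal.span {a})
  refine ⟨c, fun n => ?_⟩
  have h := hc (n + c) (by omega)
  simp only [smul_eq_mul, Ideal.mul_top, Nat.add_sub_cancel] at h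
  rw [h]
  exact Ideal.mul_mono_right inf_le_right

/- Write `J = (f)`. Once `g ^ k₀` kills everything some power of `g` kills, Artin–Rees for
`(g ^ (c + k₀))` strips that power off `g ^ e * z ∈ J ^ e` at the cost of `c₁` powers of `J`,
up to the annihilator of `g ^ k₀`; and `J ^ N ⊆ (f ^ c)` since `J ⊆ √(f ^ c)`. -/
theorem IsNoetherianRing.exists_pow_sub_mul_mem_span_pow {ι : Type*} (f : ι → R) (g : R)
    (c : ℕ) :
    ∃ e, c ≤ e ∧ ∀ z, g ^ e * z ∈ Ideal.span (Set.range fun s => f s ^ e) →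
      g ^ (e - c) * z ∈ Ideal.span (Set.range fun s => f s ^ c) := by
  set J := Ideal.span (Set.range f)
  obtain ⟨k₀, hk₀⟩ := exists_pow_mul_eq_zero_of_pow_mul_eq_zero g
  obtain ⟨c₁, hc₁⟩ := J.exists_pow_add_inf_span_singleton_le (g ^ (c + k₀))
  obtain ⟨N, hN⟩ : ∃ N, J ^ N ≤ Ideal.span (Set.range fun s => f s ^ c) := by
    refine Ideal.exists_pow_le_of_le_radical_of_fg ?_ (IsNoetherian.noetherian J)
    rw [Ideal.span_le]
    rintro _ ⟨s, rfl⟩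
    exact ⟨c, Ideal.subset_span ⟨s, rfl⟩⟩
  refine ⟨N + c₁ + (c + k₀), by omega, fun z hz => ?_⟩
  set e := N + c₁ + (c + k₀)
  have hspan : Ideal.span (Set.range fun s => f s ^ e) ≤ J ^ (N + c₁) := by
    rw [Ideal.span_le]
    rintro _ ⟨s, rfl⟩
    exact Ideal.pow_le_pow_right (by omega)
      (Ideal.pow_mem_pow (Ideal.subset_span (Set.mem_range_self s)) e)
  have hsplit : g ^ (c + k₀) * (g ^ (e - (c + k₀)) * z) = g ^ e * z := by
    rw [← mul_assoc, pow_mul_pow_sub _ (by omega)]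
  have hmem : g ^ e * z ∈ J ^ (N + c₁) ⊓ Ideal.span {g ^ (c + k₀)} :=
    ⟨hspan hz, hsplit ▸ Ideal.mul_mem_right _ _ (Ideal.mem_span_singleton_self _)⟩
  obtain ⟨y, hy, hyz⟩ := Ideal.mem_mul_span_singleton.1 (hc₁ N hmem)
  have hker : g ^ k₀ * (g ^ (e - (c + k₀)) * z - y) = 0 :=
    hk₀ (c + k₀) _ (by rw [mul_sub, hsplit, ← hyz, mul_comm y, sub_self])
  have hzy : g ^ (e - c) * z = g ^ k₀ * y := by
    rw [mul_sub, sub_eq_zero, ← mul_assoc, ← pow_add] at hker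
    rwa [show k₀ + (e - (c + k₀)) = e - c by omega] at hker
  exact hzy ▸ hN (Ideal.mul_mem_left _ _ hy)

end Noetherian

namespace Fin

variable {m : ℕ}

theorem last_notMem_map_castSuccEmb (S : Finset (Fin m)) : last m ∉ S.map castSuccEmb := by
  simp [castSucc_ne_last]

theorem compl_map_castSuccEmb (S : Finset (Fin m)) :
    (S.map castSuccEmb)ᶜ = insert (last m) (Sᶜ.map castSuccEmb) := by
  ext a
  induction a using lastCases <;> simp [castSucc_ne_last]

theorem compl_insert_last_map_castSuccEmb (S : Finset (Fin m)) :
    (insert (last m) (S.map castSuccEmb))ᶜ = Sᶜ.map castSuccEmb := by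
  ext a
  induction a using lastCases <;> simp [castSucc_ne_last]

theorem preimage_castSucc_map_castSuccEmb (S : Finset (Fin m)) :
    (S.map castSuccEmb).preimage castSucc (castSucc_injective m).injOn = S := by
  ext; simp

theorem preimage_castSucc_insert_last (T : Finset (Fin (m + 1))) :
    (insert (last m) T).preimage castSucc (castSucc_injective m).injOn =
      T.preimage castSucc (castSucc_injective m).injOn := by
  ext; simp [castSucc_ne_last]

theorem map_castSuccEmb_preimage {T : Finset (Fin (m + 1))} (h : last m ∉ T) :
    (T.preimage castSucc (castSucc_injective m).injOn).map castSuccEmb = T := by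
  ext a
  induction a using lastCases <;> simp [h]

theorem insert_last_map_castSuccEmb_preimage {T : Finset (Fin (m + 1))} (h : last m ∈ T) :
    insert (last m) ((T.preimage castSucc (castSucc_injective m).injOn).map castSuccEmb) = T := by
  ext a
  induction a using lastCases <;> simp [h, castSucc_ne_last]

end Fin

section KoszulComplex

variable {R : Type*} [CommRing R] {m : ℕ}

open Fin

namespace KoszulTerm

variable {p : ℕ}

instance : Module R (KoszulTerm R m p) := inferInstanceAs (Module R (_ → R))

@[ext]
theorem ext {x y : KoszulTerm R m p} (h : ∀ S, x S = y S) : x = y := funext h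

@[simp] theorem zero_apply (S) : (0 : KoszulTerm R m p) S = 0 := rfl

@[simp] theorem add_apply (x y : KoszulTerm R m p) (S) : (x + y) S = x S + y S := rfl

@[simp] theorem smul_apply (c : R) (x : KoszulTerm R m p) (S) : (c • x) S = c * x S := rfl

/-- The coefficient of `e_T`, read as `0` when `T` does not have `p` elements. -/
def coeff (x : KoszulTerm R m p) (T : Finset (Fin m)) : R :=
  if h : T.card = p then x ⟨T, h⟩ else 0

theorem coeff_of_card (x : KoszulTerm R m p) {T : Finset (Fin m)} (h : T.card = p) :
    x.coeff T = x ⟨T, h⟩ :=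
  dif_pos h

@[simp] theorem coeff_add (x y : KoszulTerm R m p) (T) :
    (x + y).coeff T = x.coeff T + y.coeff T := by
  unfold coeff; split_ifs <;> simp

@[simp] theorem coeff_smul (c : R) (x : KoszulTerm R m p) (T) :
    (c • x).coeff T = c * x.coeff T := by
  unfold coeff; split_ifs <;> simp

end KoszulTerm

theorem koszulDiff_apply (F : Fin m → R) (p : ℕ) (x : KoszulTerm R m (p + 1))
    {S : Finset (Fin m)} (hS : S.card = p) :
    koszulDiff F p x ⟨S, hS⟩ =
      ∑ i ∈ Sᶜ, (koszulSign i S : R) * F i * x.coeff (insert i S) := by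
  rw [koszulDiff, ← Finset.sum_attach Sᶜ]
  refine Finset.sum_congr rfl fun i _ => ?_
  rw [KoszulTerm.coeff_of_card]

theorem koszulDiff_add (F : Fin m → R) (p : ℕ) (x y : KoszulTerm R m (p + 1)) :
    koszulDiff F p (x + y) = koszulDiff F p x + koszulDiff F p y := by
  ext ⟨S, hS⟩
  simp only [koszulDiff_apply F p _ hS, KoszulTerm.add_apply, KoszulTerm.coeff_add, mul_add,
    Finset.sum_add_distrib]

theorem koszulDiff_smul (F : Fin m → R) (p : ℕ) (c : R) (x : KoszulTerm R m (p + 1)) :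
    koszulDiff F p (c • x) = c • koszulDiff F p x := by
  ext ⟨S, hS⟩
  simp only [koszulDiff_apply F p _ hS, KoszulTerm.smul_apply, KoszulTerm.coeff_smul,
    Finset.mul_sum]
  exact Finset.sum_congr rfl fun _ _ => by ring

theorem koszulTransition_add (F : Fin m → R) (i j p : ℕ) (x y : KoszulTerm R m p) :
    koszulTransition F i j p (x + y) =
      koszulTransition F i j p x + koszulTransition F i j p y := by
  ext S; exact mul_add ..

theorem koszulTransition_smul (F : Fin m → R) (i j p : ℕ) (c : R) (x : KoszulTerm R m p) :
    koszulTransition F i j p (c • x) = c • koszulTransition F i j p x := by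
  ext S; exact mul_left_comm ..

theorem coeff_koszulTransition (F : Fin m → R) (i j p : ℕ) (x : KoszulTerm R m p) (T) :
    (koszulTransition F i j p x).coeff T = (∏ s ∈ T, F s ^ (j - i)) * x.coeff T := by
  unfold KoszulTerm.coeff; split_ifs <;> simp [koszulTransition]

theorem koszulTransition_koszulTransition (F : Fin m → R) {i i' j : ℕ} (hi : i ≤ i')
    (hj : i' ≤ j) (p : ℕ) (x : KoszulTerm R m p) :
    koszulTransition F i i' p (koszulTransition F i' j p x) = koszulTransition F i j p x := by
  ext S
  simp only [koszulTransition, ← mul_assoc, ← Finset.prod_mul_distrib, ← pow_add]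
  rw [show i' - i + (j - i') = j - i by omega]

theorem koszulDiff_koszulTransition (F : Fin m → R) {i j : ℕ} (h : i ≤ j) (p : ℕ)
    (x : KoszulTerm R m (p + 1)) :
    koszulDiff (fun a => F a ^ i) p (koszulTransition F i j (p + 1) x) =
      koszulTransition F i j p (koszulDiff (fun a => F a ^ j) p x) := by
  ext ⟨S, hS⟩
  simp only [koszulTransition, koszulDiff_apply _ p _ hS, coeff_koszulTransition, Finset.mul_sum]
  refine Finset.sum_congr rfl fun s hs => ?_
  rw [Finset.prod_insert (Finset.mem_compl.1 hs), ← pow_mul_pow_sub (F s) h]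
  ring

theorem exists_koszulDiff_zero_eq_iff (F : Fin m → R) (y : KoszulTerm R m 0) :
    (∃ W, koszulDiff F 0 W = y) ↔ y ⟨∅, rfl⟩ ∈ Ideal.span (Set.range F) := by
  have hd : ∀ W, koszulDiff F 0 W ⟨∅, rfl⟩ = ∑ i, F i * W.coeff {i} := by
    intro W
    rw [koszulDiff_apply F 0 W Finset.card_empty]
    simp [koszulSign]
  have hext : ∀ z : KoszulTerm R m 0, z ⟨∅, rfl⟩ = y ⟨∅, rfl⟩ → z = y := by
    intro z h
    ext ⟨S, hS⟩
    obtain rfl := Finset.card_eq_zero.1 hS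
    exact h
  constructor
  · rintro ⟨W, rfl⟩
    rw [hd]
    exact Ideal.sum_mem _ fun i _ => Ideal.mul_mem_right _ _ (Ideal.subset_span ⟨i, rfl⟩)
  · intro h
    obtain ⟨c, hc⟩ := (Submodule.mem_span_range_iff_exists_fun R).1 h
    let W : KoszulTerm R m (0 + 1) := fun S => ∑ i ∈ S.1, c i
    refine ⟨W, hext _ ?_⟩
    rw [hd, ← hc]
    refine Finset.sum_congr rfl fun i _ => ?_
    rw [KoszulTerm.coeff_of_card _ (Finset.card_singleton i), smul_eq_mul, mul_comm]
    simp [W]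

theorem koszulSign_castSucc_map (i : Fin m) (S : Finset (Fin m)) :
    koszulSign i.castSucc (S.map castSuccEmb) = koszulSign i S := by
  simp [koszulSign, Finset.filter_map, Function.comp_def]

theorem koszulSign_last_map (S : Finset (Fin m)) :
    koszulSign (last m) (S.map castSuccEmb) = (-1) ^ S.card := by
  simp [koszulSign, Finset.filter_map, Function.comp_def, castSucc_lt_last]

theorem koszulSign_castSucc_insert_last_map (i : Fin m) (S : Finset (Fin m)) :
    koszulSign i.castSucc (insert (last m) (S.map castSuccEmb)) = koszulSign i S := by
  simp [koszulSign, Finset.filter_insert, Finset.filter_map, Function.comp_def,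
    (castSucc_lt_last i).not_gt]

namespace KoszulTerm

variable {p : ℕ}

/- `K(f)` is the cone of multiplication by `f (last m)` on `K(f ∘ castSucc)`: a cochain splits
into its coefficients on the `e_T` with `last m ∉ T` and those with `last m ∈ T`. -/
def avoidLast (x : KoszulTerm R (m + 1) p) : KoszulTerm R m p :=
  fun S => x ⟨S.1.map castSuccEmb, by rw [Finset.card_map, S.2]⟩

def withLast (x : KoszulTerm R (m + 1) (p + 1)) : KoszulTerm R m p :=
  fun S => x ⟨insert (last m) (S.1.map castSuccEmb), by
    rw [Finset.card_insert_of_notMem (last_notMem_map_castSuccEmb _), Finset.card_map, S.2]⟩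

@[simp] theorem avoidLast_zero : (0 : KoszulTerm R (m + 1) p).avoidLast = 0 := rfl

@[simp] theorem withLast_zero : (0 : KoszulTerm R (m + 1) (p + 1)).withLast = 0 := rfl

theorem coeff_avoidLast (x : KoszulTerm R (m + 1) p) (T : Finset (Fin m)) :
    x.avoidLast.coeff T = x.coeff (T.map castSuccEmb) := by
  simp only [coeff, Finset.card_map]
  split_ifs <;> rfl

theorem coeff_withLast (x : KoszulTerm R (m + 1) (p + 1)) (T : Finset (Fin m)) :
    x.withLast.coeff T = x.coeff (insert (last m) (T.map castSuccEmb)) := by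
  simp only [coeff, Finset.card_insert_of_notMem (last_notMem_map_castSuccEmb _),
    Finset.card_map, Nat.add_right_cancel_iff]
  split_ifs <;> rfl

theorem ext_avoidLast_withLast {x y : KoszulTerm R (m + 1) (p + 1)}
    (h₁ : x.avoidLast = y.avoidLast) (h₂ : x.withLast = y.withLast) : x = y := by
  ext ⟨T, hT⟩
  by_cases hl : last m ∈ T
  · obtain ⟨S, rfl⟩ : ∃ S : Finset (Fin m), insert (last m) (S.map castSuccEmb) = T :=
      ⟨_, insert_last_map_castSuccEmb_preimage hl⟩
    exact congrFun h₂ ⟨S, by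
      simpa [Finset.card_insert_of_notMem (last_notMem_map_castSuccEmb _)] using hT⟩
  · obtain ⟨S, rfl⟩ : ∃ S : Finset (Fin m), S.map castSuccEmb = T :=
      ⟨_, map_castSuccEmb_preimage hl⟩
    exact congrFun h₁ ⟨S, by simpa using hT⟩

theorem exists_avoidLast_withLast (a : KoszulTerm R m (p + 1)) (b : KoszulTerm R m p) :
    ∃ x : KoszulTerm R (m + 1) (p + 1), x.avoidLast = a ∧ x.withLast = b := by
  refine ⟨fun T => if last m ∈ T.1
    then b.coeff (T.1.preimage castSucc (castSucc_injective m).injOn)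
    else a.coeff (T.1.preimage castSucc (castSucc_injective m).injOn), ?_, ?_⟩ <;>
  ext ⟨S, hS⟩ <;>
  simp [avoidLast, withLast, preimage_castSucc_insert_last, preimage_castSucc_map_castSuccEmb,
    coeff_of_card _ hS]

end KoszulTerm

open KoszulTerm

theorem avoidLast_koszulDiff (F : Fin (m + 1) → R) (p : ℕ) (x : KoszulTerm R (m + 1) (p + 1)) :
    (koszulDiff F p x).avoidLast =
      koszulDiff (fun a => F a.castSucc) p x.avoidLast +
        ((-1) ^ p * F (last m)) • x.withLast := by
  ext ⟨S, hS⟩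
  rw [KoszulTerm.add_apply, KoszulTerm.smul_apply, avoidLast, koszulDiff_apply _ _ _ hS,
    koszulDiff_apply _ _ _ (by rw [Finset.card_map, hS]), compl_map_castSuccEmb,
    Finset.sum_insert (last_notMem_map_castSuccEmb _), Finset.sum_map, add_comm]
  congr 1
  · refine Finset.sum_congr rfl fun i _ => ?_
    rw [castSuccEmb_apply, koszulSign_castSucc_map, coeff_avoidLast, Finset.map_insert,
      castSuccEmb_apply]
  · rw [koszulSign_last_map, hS, coeff_of_card _ (by
      rw [Finset.card_insert_of_notMem (last_notMem_map_castSuccEmb _), Finset.card_map, hS])]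
    push_cast
    rfl

theorem withLast_koszulDiff (F : Fin (m + 1) → R) (p : ℕ) (x : KoszulTerm R (m + 1) (p + 2)) :
    (koszulDiff F (p + 1) x).withLast = koszulDiff (fun a => F a.castSucc) p x.withLast := by
  ext ⟨S, hS⟩
  rw [withLast, koszulDiff_apply _ _ _ hS, koszulDiff_apply _ _ _ (by
      rw [Finset.card_insert_of_notMem (last_notMem_map_castSuccEmb _), Finset.card_map, hS]),
    compl_insert_last_map_castSuccEmb, Finset.sum_map]
  refine Finset.sum_congr rfl fun i _ => ?_
  rw [castSuccEmb_apply, koszulSign_castSucc_insert_last_map, coeff_withLast, Finset.map_insert,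
    castSuccEmb_apply, Finset.insert_comm]

theorem avoidLast_koszulTransition (F : Fin (m + 1) → R) (i j p : ℕ)
    (x : KoszulTerm R (m + 1) p) :
    (koszulTransition F i j p x).avoidLast =
      koszulTransition (fun a => F a.castSucc) i j p x.avoidLast := by
  ext ⟨S, hS⟩
  simp [avoidLast, koszulTransition]

theorem withLast_koszulTransition (F : Fin (m + 1) → R) (i j p : ℕ)
    (x : KoszulTerm R (m + 1) (p + 1)) :
    (koszulTransition F i j (p + 1) x).withLast =
      F (last m) ^ (j - i) • koszulTransition (fun a => F a.castSucc) i j p x.withLast := by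
  ext ⟨S, hS⟩
  simp [withLast, koszulTransition, mul_assoc]

/-- Pro-vanishing of `H^{-(p+1)}(K(R, f^i))`, stated on cocycles. -/
def KoszulCohomologyProZero (f : Fin m → R) (p : ℕ) : Prop :=
  ∀ i, ∃ j, i ≤ j ∧ ∀ x : KoszulTerm R m (p + 1),
    koszulDiff (fun a => f a ^ j) p x = 0 →
    ∃ y, koszulDiff (fun a => f a ^ i) (p + 1) y = koszulTransition f i j (p + 1) x

/-- The `withLast` part of a cocycle of `K(f^j)`, carried to stage `i` by the transition map of
`K(f)` (which contributes the factor `f (last m) ^ (j - i)`), is a boundary of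
`K((f ∘ castSucc)^i)`. -/
def KoszulConnectingProZero (f : Fin (m + 1) → R) (p : ℕ) : Prop :=
  ∀ i, ∃ j, i ≤ j ∧ ∀ x : KoszulTerm R (m + 1) (p + 1),
    koszulDiff (fun a => f a ^ j) p x = 0 →
    ∃ W, koszulDiff (fun a => f a.castSucc ^ i) p W =
      f (last m) ^ (j - i) • koszulTransition (fun a => f a.castSucc) i j p x.withLast

theorem koszulCohomologyProZero_fin_zero (f : Fin 0 → R) (p : ℕ) :
    KoszulCohomologyProZero f p :=
  fun i => ⟨i, le_rfl, fun _ _ =>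
    ⟨0, KoszulTerm.ext fun S => absurd S.2 (by simp [Finset.eq_empty_of_isEmpty S.1])⟩⟩

theorem KoszulCohomologyProZero.koszulConnectingProZero {f : Fin (m + 1) → R} {q : ℕ}
    (h : KoszulCohomologyProZero (fun a => f a.castSucc) q) :
    KoszulConnectingProZero f (q + 1) := by
  intro i
  obtain ⟨j, hij, H⟩ := h i
  refine ⟨j, hij, fun x hx => ?_⟩
  have hxB := congrArg withLast hx
  rw [withLast_koszulDiff, withLast_zero] at hxB
  obtain ⟨w, hw⟩ := H _ hxB
  exact ⟨f (last m) ^ (j - i) • w, by rw [koszulDiff_smul, hw]⟩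

theorem koszulConnectingProZero_zero [IsNoetherianRing R] (f : Fin (m + 1) → R) :
    KoszulConnectingProZero f 0 := by
  intro i
  obtain ⟨e, hie, he⟩ := IsNoetherianRing.exists_pow_sub_mul_mem_span_pow
    (fun a : Fin m => f a.castSucc) (f (last m)) i
  refine ⟨e, hie, fun x hx => (exists_koszulDiff_zero_eq_iff _ _).2 ?_⟩
  have hxA : koszulDiff (fun a => f a.castSucc ^ e) 0 x.avoidLast ⟨∅, rfl⟩ +
      f (last m) ^ e * x.withLast ⟨∅, rfl⟩ = 0 := by
    simpa [avoidLast_koszulDiff] using congrFun (congrArg avoidLast hx) ⟨∅, rfl⟩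
  have hmem :=
    (exists_koszulDiff_zero_eq_iff (fun a => f a.castSucc ^ e) _).1 ⟨x.avoidLast, rfl⟩
  simpa [koszulTransition] using he _ (eq_neg_of_add_eq_zero_right hxA ▸ neg_mem hmem)

theorem KoszulCohomologyProZero.of_castSucc {f : Fin (m + 1) → R} {p : ℕ}
    (h : KoszulCohomologyProZero (fun a => f a.castSucc) p) (hc : KoszulConnectingProZero f p) :
    KoszulCohomologyProZero f p := by
  intro i
  obtain ⟨i₁, hi₁, H₁⟩ := h i
  obtain ⟨j, hj, H₂⟩ := hc i₁
  refine ⟨j, hi₁.trans hj, fun x hx => ?_⟩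
  obtain ⟨W, hW⟩ := H₂ x hx
  have hxA : koszulDiff (fun a => f a.castSucc ^ j) p x.avoidLast =
      ((-1) ^ (p + 1) * f (last m) ^ j) • x.withLast := by
    have h0 := congrArg avoidLast hx
    rw [avoidLast_koszulDiff, avoidLast_zero] at h0
    rw [pow_succ, mul_neg_one, neg_mul, neg_smul]
    exact eq_neg_of_add_eq_zero_left h0
  have hv : koszulDiff (fun a => f a.castSucc ^ i₁) p
      (koszulTransition (fun a => f a.castSucc) i₁ j (p + 1) x.avoidLast +
        ((-1) ^ p * f (last m) ^ i₁) • W) = 0 := by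
    rw [koszulDiff_add, koszulDiff_koszulTransition _ hj, hxA, koszulDiff_smul, hW,
      koszulTransition_smul, smul_smul, ← add_smul, mul_assoc, pow_mul_pow_sub _ hj, pow_succ]
    simp
  obtain ⟨y', hy'⟩ := H₁ _ hv
  obtain ⟨y, hyA, hyB⟩ := exists_avoidLast_withLast y'
    (f (last m) ^ (i₁ - i) • koszulTransition (fun a => f a.castSucc) i i₁ (p + 1) W)
  refine ⟨y, ext_avoidLast_withLast ?_ ?_⟩
  · rw [avoidLast_koszulDiff, avoidLast_koszulTransition, hyA, hyB, hy', koszulTransition_add,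
      koszulTransition_koszulTransition _ hi₁ hj, koszulTransition_smul, smul_smul, add_assoc,
      ← add_smul, mul_assoc, pow_mul_pow_sub _ hi₁, pow_succ]
    simp
  · rw [withLast_koszulDiff, withLast_koszulTransition, hyB, koszulDiff_smul,
      koszulDiff_koszulTransition _ hi₁, hW, koszulTransition_smul,
      koszulTransition_koszulTransition _ hi₁ hj, smul_smul, ← pow_add,
      show i₁ - i + (j - i₁) = j - i by omega]

theorem koszulCohomologyProZero [IsNoetherianRing R] (f : Fin m → R) (p : ℕ) :
    KoszulCohomologyProZero f p := by
  induction m generalizing p with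
  | zero => exact koszulCohomologyProZero_fin_zero f p
  | succ m ih =>
    refine (ih _ p).of_castSucc ?_
    cases p with
    | zero => exact koszulConnectingProZero_zero f
    | succ q => exact (ih _ q).koszulConnectingProZero

end KoszulComplex

theorem noetherian_ideal_weakly_proregular_general
    (R : Type*) [CommRing R] [IsNoetherianRing R]
    (m : ℕ) (f : Fin m → R)
    (k : ℤ) :
    ∀ i : ℕ, ∃ j : ℕ, i ≤ j ∧
      ∀ x : KoszulTerm R m (((-k).toNat - 1) + 1),
        koszulDiff (fun a => f a ^ j) ((-k).toNat - 1) x = 0 →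
        ∃ y : KoszulTerm R m ((((-k).toNat - 1) + 1) + 1),
          koszulDiff (fun a => f a ^ i) (((-k).toNat - 1) + 1) y =
            koszulTransition f i j (((-k).toNat - 1) + 1) x :=
  koszulCohomologyProZero f _

/-- Every ideal `I` of a Noetherian ring `R` is weakly proregular:
for any finite generating tuple `(f₀,…,f_n)` of `I` and any degree `k < 0`, the
inverse system of Koszul cohomologies `(H^k(K(R,(f₀^i,…,f_n^i))))_i` is pro-zero;
elementwise: for every stage `i` there is a stage `j ≥ i` such that the transition
map sends every `k`-cocycle of `K(R, f^j)` to a `k`-coboundary of `K(R, f^i)`. -/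
theorem noetherian_ideal_weakly_proregular
    (R : Type*) [CommRing R] [IsNoetherianRing R] (I : Ideal R)
    (m : ℕ) (f : Fin m → R) (hf : Ideal.span (Set.range f) = I)
    (k : ℤ) (hk : k < 0) :
    ∀ i : ℕ, ∃ j : ℕ, i ≤ j ∧
      ∀ x : KoszulTerm R m (((-k).toNat - 1) + 1),
        koszulDiff (fun a => f a ^ j) ((-k).toNat - 1) x = 0 →
        ∃ y : KoszulTerm R m ((((-k).toNat - 1) + 1) + 1),
          koszulDiff (fun a => f a ^ i) (((-k).toNat - 1) + 1) y =
            koszulTransition f i j (((-k).toNat - 1) + 1) x :=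
  noetherian_ideal_weakly_proregular_general R m f k
end

section
/- Let k be a field and let f, g ∈ k((t))^×. The Contou-Carrère symbol formula (f,g) = (−1)^{ν(f)ν(g)} · (a₀^{ν(g)} / b₀^{ν(f)}) · ∏∏-correction terms specializes, over the field k (where all coefficients a_i, b_j with negative index vanish), to the tame symbol: (f,g) = (−1)^{ν(f)ν(g)} (f^{ν(g)}/g^{ν(f)})|_{t=0}. -/
/-! `f ^ ν(g) / g ^ ν(f)` has order `ν(f) ν(g) - ν(g) ν(f) = 0`, so its constant coefficient is
its leading coefficient; since order and leading coefficient are multiplicative on units of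
`k((t))`, that leading coefficient is `a₀ ^ ν(g) / b₀ ^ ν(f)`. -/

namespace HahnSeries

variable {Γ R : Type*}

theorem coeff_zero_eq_leadingCoeff [Zero Γ] [LinearOrder Γ] [Zero R] {x : R⟦Γ⟧}
    (hx : x.order = 0) : x.coeff 0 = x.leadingCoeff := by
  rw [leadingCoeff_eq, hx]

section Monoid

variable [AddCommMonoid Γ] [LinearOrder Γ] [IsOrderedCancelAddMonoid Γ]
  [Semiring R] [NoZeroDivisors R]

noncomputable def leadingCoeffHom : R⟦Γ⟧ →*₀ R where
  toFun := leadingCoeff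
  map_zero' := leadingCoeff_zero
  map_one' := leadingCoeff_one
  map_mul' x y := leadingCoeff_mul x y

noncomputable def unitsLeadingCoeffHom : R⟦Γ⟧ˣ →* Rˣ :=
  Units.map (leadingCoeffHom : R⟦Γ⟧ →*₀ R).toMonoidHom

variable [Nontrivial R]

noncomputable def unitsOrderHom : R⟦Γ⟧ˣ →* Multiplicative Γ where
  toFun u := .ofAdd (u : R⟦Γ⟧).order
  map_one' := by simp
  map_mul' u v := by simp [order_mul u.ne_zero v.ne_zero, ofAdd_add]

end Monoid

section Group

variable [AddCommGroup Γ] [LinearOrder Γ] [IsOrderedAddMonoid Γ]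

section Semiring

variable [Semiring R] [NoZeroDivisors R] [Nontrivial R]

theorem order_units_zpow (u : R⟦Γ⟧ˣ) (n : ℤ) :
    ((u ^ n : R⟦Γ⟧ˣ) : R⟦Γ⟧).order = n • (u : R⟦Γ⟧).order :=
  Multiplicative.ofAdd.injective (map_zpow unitsOrderHom u n)

theorem order_units_div (u v : R⟦Γ⟧ˣ) :
    ((u / v : R⟦Γ⟧ˣ) : R⟦Γ⟧).order = (u : R⟦Γ⟧).order - (v : R⟦Γ⟧).order :=
  Multiplicative.ofAdd.injective (map_div unitsOrderHom u v)

end Semiring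

section DivisionRing

variable [DivisionRing R]

theorem leadingCoeff_units_zpow (u : R⟦Γ⟧ˣ) (n : ℤ) :
    ((u ^ n : R⟦Γ⟧ˣ) : R⟦Γ⟧).leadingCoeff = (u : R⟦Γ⟧).leadingCoeff ^ n := by
  have := congrArg Units.val (map_zpow unitsLeadingCoeffHom u n)
  rwa [Units.val_zpow_eq_zpow_val] at this

theorem leadingCoeff_units_div (u v : R⟦Γ⟧ˣ) :
    ((u / v : R⟦Γ⟧ˣ) : R⟦Γ⟧).leadingCoeff =
      (u : R⟦Γ⟧).leadingCoeff / (v : R⟦Γ⟧).leadingCoeff := by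
  have := congrArg Units.val (map_div unitsLeadingCoeffHom u v)
  rwa [Units.val_div_eq_div_val] at this

end DivisionRing

end Group

end HahnSeries

namespace LaurentSeries

open HahnSeries

theorem order_zpow_order_div_zpow_order {R : Type*} [Semiring R] [NoZeroDivisors R]
    [Nontrivial R] (f g : (LaurentSeries R)ˣ) :
    ((f ^ (g : LaurentSeries R).order / g ^ (f : LaurentSeries R).order :
      (LaurentSeries R)ˣ) : LaurentSeries R).order = 0 := by
  rw [order_units_div, order_units_zpow, order_units_zpow, smul_eq_mul, smul_eq_mul, mul_comm,
    sub_self]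

end LaurentSeries

open HahnSeries in
/-- Over a field `k` (where every unit of `k((t))` factors as
`a₀ t^{ν(f)} ∏_{i≥1}(1 − a_i t^i)` with no negative-index factors, so the
double-product correction terms of the Contou-Carrère formula are trivial),
the Contou-Carrère symbol formula
`(f,g) = (−1)^{ν(f)ν(g)} · a₀^{ν(g)}/b₀^{ν(f)}` specializes to the tame symbol
`(f,g) = (−1)^{ν(f)ν(g)} (f^{ν(g)}/g^{ν(f)})|_{t=0}`.  Here `a₀ = coeff_{ν(f)} f`
and `b₀ = coeff_{ν(g)} g` are the leading coefficients, and `|_{t=0}` is the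
constant coefficient. -/
theorem contouCarrere_eq_tame_over_field
    (k : Type*) [Field k] (f g : (LaurentSeries k)ˣ) :
    (-1 : k) ^ ((f : LaurentSeries k).order * (g : LaurentSeries k).order) *
        (((f : LaurentSeries k).coeff (f : LaurentSeries k).order) ^
            ((g : LaurentSeries k).order) /
          ((g : LaurentSeries k).coeff (g : LaurentSeries k).order) ^
            ((f : LaurentSeries k).order)) =
      (-1 : k) ^ ((f : LaurentSeries k).order * (g : LaurentSeries k).order) *
        ((f ^ ((g : LaurentSeries k).order) / g ^ ((f : LaurentSeries k).order) :
            (LaurentSeries k)ˣ) : LaurentSeries k).coeff 0 := by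
  rw [coeff_zero_eq_leadingCoeff (LaurentSeries.order_zpow_order_div_zpow_order f g),
    leadingCoeff_units_div, leadingCoeff_units_zpow, leadingCoeff_units_zpow, leadingCoeff_eq,
    leadingCoeff_eq]
end
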